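/- arXiv:2002.00304 — 2 statements merged into one kernel-verified Lean document; each statement's English description precedes it below -/
import Mathlib

section
/- Let R be an alternative ring with a nontrivial idempotent e₁ satisfying conditions (i) and (ii), let n ≥ 2 be an integer and let D : R → R be a multiplicative Lie n-derivation. Then for every a ∈ R₁₂ and every b ∈ R₂₁ one has D(a + b) = D(a) + D(b). -/
/-- The commutative center of a (possibly non-associative, non-unital) ring. -/
def rctr (R : Type*) [NonUnitalNonAssocRing R] : Set R := {z | ∀ x, z * x = x * z}

/-- `R` is an alternative ring. -/
def IsAlt (R : Type*) [NonUnitalNonAssocRing R] : Prop :=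
  ∀ x y : R, (x * x) * y = x * (x * y) ∧ (y * x) * x = y * (x * x)

/-- Peirce components relative to an idempotent `e`. -/
def P11 {R : Type*} [NonUnitalNonAssocRing R] (e : R) : Set R := {x | e * x = x ∧ x * e = x}
def P12 {R : Type*} [NonUnitalNonAssocRing R] (e : R) : Set R := {x | e * x = x ∧ x * e = 0}
def P21 {R : Type*} [NonUnitalNonAssocRing R] (e : R) : Set R := {x | e * x = 0 ∧ x * e = x}
def P22 {R : Type*} [NonUnitalNonAssocRing R] (e : R) : Set R := {x | e * x = 0 ∧ x * e = 0}

/-- The iterated commutator `p_n`: `p_1(x) = x`,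
`p_n(x_1,…,x_n) = [p_{n-1}(x_1,…,x_{n-1}), x_n]`. -/
def pn {R : Type*} [NonUnitalNonAssocRing R] : (n : ℕ) → (Fin n → R) → R
  | 0, _ => 0
  | 1, x => x 0
  | (m+2), x =>
      pn (m+1) (fun i => x i.castSucc) * x (Fin.last (m+1))
        - x (Fin.last (m+1)) * pn (m+1) (fun i => x i.castSucc)

/-- A (not necessarily additive) map `D` is a multiplicative Lie `n`-derivation. -/
def IsMultLieNDeriv {R : Type*} [NonUnitalNonAssocRing R] (n : ℕ) (D : R → R) : Prop :=
  ∀ x : Fin n → R, D (pn n x) = ∑ i : Fin n, pn n (Function.update x i (D (x i)))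

/-! Write `κ = commRight e₁`, so `κ x = [x, e₁]`. In an alternative ring `κ³ = κ`, and feeding
first `(x, y, e₁, …, e₁)` and then `([x, y], e₁, …, e₁)` into the Lie `n`-derivation identity
shows that `D (κ [x, y]) - κ [D x, y]` is additive in `x`. Hence `Γ = D (e₁ + a) - D e₁ - D a`
satisfies `D (κ [e₁ + a, w]) = D (κ [e₁, w]) + D (κ [a, w]) + κ [Γ, w]` for every `w`. Taking
`w = e₁` puts `Γ` in `R₁₁ + R₂₂`, taking `w ∈ R₂₁` shows that `Γ` commutes with `R₂₁`, so `Γ` is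
central by (ii). Finally `w = e₁ - b` gives `κ [e₁ + a, w] = a + b`, `κ [e₁, w] = b` and
`κ [a, w] = a`. -/

section IteratedCommutator
variable {R : Type*} [NonUnitalNonAssocRing R]

theorem pn_snoc {n : ℕ} (w : Fin (n + 1) → R) (z : R) :
    pn (n + 2) (Fin.snoc w z) = pn (n + 1) w * z - z * pn (n + 1) w := by
  simp only [pn, Fin.snoc_castSucc, Fin.snoc_last]

theorem pn_update_add : ∀ {n : ℕ} (w : Fin n → R) (i : Fin n) (x y : R),
    pn n (Function.update w i (x + y)) =
      pn n (Function.update w i x) + pn n (Function.update w i y)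
  | 0, _, i, _, _ => i.elim0
  | 1, w, i, x, y => by fin_cases i; simp [pn]
  | n + 2, w, i, x, y => by
    rw [← Fin.snoc_init_self w]
    cases i using Fin.lastCases with
    | last => simp only [Fin.update_snoc_last, pn_snoc, add_mul, mul_add]; abel
    | cast i =>
      simp only [← Fin.snoc_update, pn_snoc, pn_update_add _ i x y, add_mul, mul_add]; abel

def pnCons {k : ℕ} (q : Fin k → R) : R →+ R :=
  AddMonoidHom.mk' (fun x => pn (k + 1) (Fin.cons x q)) fun x y => by
    simpa only [Fin.update_cons_zero] using pn_update_add (Fin.cons 0 q) 0 x y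

theorem pnCons_apply {k : ℕ} (q : Fin k → R) (x : R) :
    pnCons q x = pn (k + 1) (Fin.cons x q) :=
  rfl

def commRight : R →+ AddMonoid.End R := AddMonoid.End.mulRight - AddMonoid.End.mulLeft

theorem commRight_apply (e x : R) : commRight e x = x * e - e * x := rfl

omit [NonUnitalNonAssocRing R] in
theorem Fin.cons_const_eq_snoc {k : ℕ} (x e : R) :
    (Fin.cons x fun _ : Fin (k + 1) => e : Fin (k + 2) → R) =
      Fin.snoc (Fin.cons x fun _ : Fin k => e : Fin (k + 1) → R) e := by
  rw [← Fin.cons_snoc_eq_snoc_cons]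
  congr 1
  funext i
  cases i using Fin.lastCases <;> simp

theorem pnCons_const (e : R) :
    ∀ (k : ℕ) (x : R), pnCons (fun _ : Fin k => e) x = (commRight e ^ k) x
  | 0, _ => rfl
  | k + 1, x => by
    rw [pnCons_apply, Fin.cons_const_eq_snoc, pn_snoc, ← pnCons_apply, pnCons_const e k,
      pow_succ']
    rfl

theorem pnCons_cons_const (e y : R) : ∀ (k : ℕ) (x : R),
    pnCons (Fin.cons y fun _ : Fin k => e) x = (commRight e ^ k) (x * y - y * x)
  | 0, _ => rfl
  | k + 1, x => by
    rw [pnCons_apply, Fin.cons_const_eq_snoc, Fin.cons_snoc_eq_snoc_cons, pn_snoc,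
      ← pnCons_apply, pnCons_cons_const e y k, pow_succ']
    rfl

end IteratedCommutator

namespace IsMultLieNDeriv
variable {R : Type*} [NonUnitalNonAssocRing R] {D : R → R}

theorem map_pnCons {k : ℕ} (hD : IsMultLieNDeriv (k + 1) D) (q : Fin k → R) (x : R) :
    D (pnCons q x) = pnCons q (D x) + ∑ i, pnCons (Function.update q i (D (q i))) x := by
  simp only [pnCons_apply, hD _, Fin.sum_univ_succ, Fin.update_cons_zero, Fin.cons_zero,
    Fin.cons_succ, Fin.cons_update]

theorem exists_map_pnCons {k : ℕ} (hD : IsMultLieNDeriv (k + 1) D) (q : Fin k → R) :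
    ∃ f : R →+ R, ∀ x, D (pnCons q x) = pnCons q (D x) + f x :=
  ⟨∑ i, pnCons (Function.update q i (D (q i))), fun x => by
    rw [hD.map_pnCons, AddMonoidHom.finsetSum_apply]⟩

theorem exists_map_commRight_pow {k : ℕ} (hD : IsMultLieNDeriv (k + 1) D) (e : R) :
    ∃ f : R →+ R, ∀ x, D ((commRight e ^ k) x) = (commRight e ^ k) (D x) + f x := by
  simpa only [pnCons_const] using hD.exists_map_pnCons fun _ => e

theorem exists_map_commRight_pow_commutator {k : ℕ} (hD : IsMultLieNDeriv (k + 2) D)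
    (e y : R) : ∃ f : R →+ R, ∀ x,
      D ((commRight e ^ k) (x * y - y * x)) = (commRight e ^ k) (D x * y - y * D x) + f x := by
  simpa only [pnCons_cons_const] using hD.exists_map_pnCons (Fin.cons y fun _ => e)

theorem map_zero {k : ℕ} (hD : IsMultLieNDeriv (k + 2) D) : D 0 = 0 := by
  -- for `e = 0` all the brackets vanish
  obtain ⟨f, hf⟩ := hD.exists_map_commRight_pow (0 : R)
  simpa using hf 0

end IsMultLieNDeriv

namespace IsAlt
variable {R : Type*} [NonUnitalNonAssocRing R]

theorem associator_swap₁₂ (halt : IsAlt R) (x y z : R) :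
    associator y x z = -associator x y z := by
  have h := (halt (x + y) z).1
  simp only [add_mul, mul_add, (halt x z).1, (halt y z).1] at h
  rw [eq_neg_iff_add_eq_zero, ← sub_eq_zero_of_eq h, associator_apply, associator_apply]
  abel

theorem associator_swap₂₃ (halt : IsAlt R) (x y z : R) :
    associator x z y = -associator x y z := by
  have h := (halt (y + z) x).2
  simp only [add_mul, mul_add, (halt y x).2, (halt z x).2] at h
  rw [eq_neg_iff_add_eq_zero, ← sub_eq_zero_of_eq h, associator_apply, associator_apply]
  abel

theorem flexible (halt : IsAlt R) (x y : R) : (x * y) * x = x * (y * x) := by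
  have h := halt.associator_swap₁₂ y x x
  simp only [associator_apply, (halt x y).2, sub_self, neg_zero] at h
  exact sub_eq_zero.mp h

theorem associator_swap₁₃ (halt : IsAlt R) (x y z : R) :
    associator z y x = -associator x y z := by
  rw [halt.associator_swap₁₂ y z x, halt.associator_swap₂₃ y x z, halt.associator_swap₁₂ x y z,
    neg_neg]

theorem mul_mul_left_eq (halt : IsAlt R) (e x y : R) :
    e * (x * y) = (e * x) * y + associator x e y := by
  rw [← neg_neg (associator x e y), ← halt.associator_swap₁₂, associator_apply]
  abel

theorem mul_mul_right_eq (halt : IsAlt R) (e x y : R) :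
    (x * y) * e = x * (y * e) - associator x e y := by
  rw [sub_eq_add_neg, ← halt.associator_swap₂₃, associator_apply]
  abel

variable (halt : IsAlt R) {e : R}
include halt

theorem mul_eq_zero_of_mem_P11_of_mem_P21 {p y : R} (hp : p ∈ P11 e) (hy : y ∈ P21 e) :
    p * y = 0 := by
  simpa [associator_apply, hp.1, hp.2, hy.1, hy.2] using halt.associator_swap₁₃ p e y

theorem mul_mem_P21_of_mem_P21_of_mem_P11 {y p : R} (hy : y ∈ P21 e) (hp : p ∈ P11 e) :
    y * p ∈ P21 e :=
  ⟨by simp [halt.mul_mul_left_eq, associator_apply, hp.1, hy.1, hy.2],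
    by simp [halt.mul_mul_right_eq, associator_apply, hp.1, hp.2, hy.2]⟩

theorem mul_eq_zero_of_mem_P21_of_mem_P22 {y q : R} (hy : y ∈ P21 e) (hq : q ∈ P22 e) :
    y * q = 0 := by
  simpa [associator_apply, hq.1, hq.2, hy.1, hy.2] using halt.associator_swap₁₃ y e q

theorem mul_mem_P21_of_mem_P22_of_mem_P21 {q y : R} (hq : q ∈ P22 e) (hy : y ∈ P21 e) :
    q * y ∈ P21 e :=
  ⟨by simp [halt.mul_mul_left_eq, associator_apply, hq.1, hq.2, hy.1],
    by simp [halt.mul_mul_right_eq, associator_apply, hq.2, hy.1, hy.2]⟩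

theorem mul_mem_P11_of_mem_P12_of_mem_P21 {a y : R} (ha : a ∈ P12 e) (hy : y ∈ P21 e) :
    a * y ∈ P11 e :=
  ⟨by simp [halt.mul_mul_left_eq, associator_apply, ha.1, ha.2, hy.1],
    by simp [halt.mul_mul_right_eq, associator_apply, ha.2, hy.1, hy.2]⟩

theorem mul_mem_P22_of_mem_P21_of_mem_P12 {y a : R} (hy : y ∈ P21 e) (ha : a ∈ P12 e) :
    y * a ∈ P22 e :=
  ⟨by simp [halt.mul_mul_left_eq, associator_apply, ha.1, hy.1, hy.2],
    by simp [halt.mul_mul_right_eq, associator_apply, ha.1, ha.2, hy.2]⟩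

end IsAlt

section CommRight
variable {R : Type*} [NonUnitalNonAssocRing R] {e : R}

theorem commRight_of_mem_P11 {x : R} (hx : x ∈ P11 e) : commRight e x = 0 := by
  rw [commRight_apply, hx.1, hx.2, sub_self]

theorem commRight_of_mem_P22 {x : R} (hx : x ∈ P22 e) : commRight e x = 0 := by
  rw [commRight_apply, hx.1, hx.2, sub_self]

theorem commRight_of_mem_P12 {x : R} (hx : x ∈ P12 e) : commRight e x = -x := by
  rw [commRight_apply, hx.1, hx.2, zero_sub]

theorem commRight_of_mem_P21 {x : R} (hx : x ∈ P21 e) : commRight e x = x := by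
  rw [commRight_apply, hx.1, hx.2, sub_zero]

variable (halt : IsAlt R) (he : IsIdempotentElem e)
include halt

theorem IsAlt.commRight_commutator_of_mem_P12_of_mem_P21 {a y : R} (ha : a ∈ P12 e)
    (hy : y ∈ P21 e) : commRight e (a * y - y * a) = 0 := by
  rw [map_sub, commRight_of_mem_P11 (halt.mul_mem_P11_of_mem_P12_of_mem_P21 ha hy),
    commRight_of_mem_P22 (halt.mul_mem_P22_of_mem_P21_of_mem_P12 hy ha), sub_zero]

theorem IsAlt.commRight_commutator_of_mem_P21 {p q y : R} (hp : p ∈ P11 e) (hq : q ∈ P22 e)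
    (hy : y ∈ P21 e) :
    commRight e ((p + q) * y - y * (p + q)) = (p + q) * y - y * (p + q) := by
  rw [add_mul, mul_add, halt.mul_eq_zero_of_mem_P11_of_mem_P21 hp hy,
    halt.mul_eq_zero_of_mem_P21_of_mem_P22 hy hq, zero_add, add_zero, map_sub,
    commRight_of_mem_P21 (halt.mul_mem_P21_of_mem_P22_of_mem_P21 hq hy),
    commRight_of_mem_P21 (halt.mul_mem_P21_of_mem_P21_of_mem_P11 hy hp)]

include he

theorem IsAlt.mul_idem_mul_idem (x : R) : (x * e) * e = x * e := by
  rw [(halt e x).2, he.eq]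

theorem IsAlt.idem_mul_idem_mul (x : R) : e * (e * x) = e * x := by
  rw [← (halt e x).1, he.eq]

theorem IsAlt.commRight_pow_three : commRight e ^ 3 = commRight e := by
  ext x
  simp only [pow_succ, pow_zero, one_mul, AddMonoid.End.coe_mul, Function.comp_apply,
    commRight_apply, sub_mul, mul_sub, halt.mul_idem_mul_idem he, halt.idem_mul_idem_mul he,
    halt.flexible]
  abel

theorem IsAlt.commRight_pow_odd (m : ℕ) : commRight e ^ (2 * m + 1) = commRight e := by
  induction m with
  | zero => rw [mul_zero, zero_add, pow_one]
  | succ m ih => rw [show 2 * (m + 1) + 1 = 2 * m + 1 + 2 by ring, pow_add, ih, ← pow_succ',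
      halt.commRight_pow_three he]

theorem IsAlt.exists_P11_P22_of_commRight_commRight_eq_zero {x : R}
    (hx : commRight e (commRight e x) = 0) : ∃ p ∈ P11 e, ∃ q ∈ P22 e, p + q = x := by
  have hflex : (e * (x * e)) * e = e * (x * e) := by
    rw [halt.flexible, halt.mul_idem_mul_idem he]
  refine ⟨e * (x * e), ⟨halt.idem_mul_idem_mul he _, hflex⟩,
    x - e * x - x * e + e * (x * e), ⟨?_, ?_⟩, ?_⟩
  · simp only [mul_add, mul_sub, halt.idem_mul_idem_mul he]
    abel
  · simp only [add_mul, sub_mul, halt.mul_idem_mul_idem he, hflex, halt.flexible]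
    abel
  · -- `commRight e (commRight e x)` is the Peirce `12 + 21` component of `x`
    simp only [commRight_apply, sub_mul, mul_sub, halt.mul_idem_mul_idem he,
      halt.idem_mul_idem_mul he, halt.flexible] at hx
    rw [← sub_eq_zero, ← neg_eq_zero, ← hx]
    abel

end CommRight

namespace IsMultLieNDeriv
variable {R : Type*} [NonUnitalNonAssocRing R] {D : R → R} {e : R} {m : ℕ}
  (halt : IsAlt R) (he : IsIdempotentElem e) (hD : IsMultLieNDeriv (m + 2) D)
include halt he hD

theorem exists_map_commRight_commutator (y : R) : ∃ f : R →+ R, ∀ x,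
    D (commRight e (x * y - y * x)) = commRight e (D x * y - y * D x) + f x := by
  obtain ⟨f₁, hf₁⟩ := hD.exists_map_commRight_pow_commutator e y
  obtain ⟨f₂, hf₂⟩ := (hD : IsMultLieNDeriv (m + 1 + 1) D).exists_map_commRight_pow e
  have hsplit : ∀ v, commRight e v = (commRight e ^ (m + 1)) ((commRight e ^ m) v) := fun v => by
    rw [show (commRight e ^ (m + 1)) ((commRight e ^ m) v) =
        (commRight e ^ (m + 1) * commRight e ^ m) v from rfl,
      ← pow_add, show m + 1 + m = 2 * m + 1 by ring, halt.commRight_pow_odd he]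
  refine ⟨(commRight e ^ (m + 1)).comp f₁ + f₂.comp ((commRight e ^ m) * commRight y),
    fun x => ?_⟩
  rw [hsplit, hf₂, hf₁, map_add, ← hsplit, AddMonoidHom.add_apply, add_assoc]
  rfl

theorem map_commRight_commutator_add (x x' y : R) :
    D (commRight e ((x + x') * y - y * (x + x'))) =
      D (commRight e (x * y - y * x)) + D (commRight e (x' * y - y * x')) +
        commRight e ((D (x + x') - D x - D x') * y - y * (D (x + x') - D x - D x')) := by
  obtain ⟨f, hf⟩ := hD.exists_map_commRight_commutator halt he y
  rw [hf, hf, hf, map_add f]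
  simp only [sub_mul, mul_sub, map_sub]
  abel

theorem map_add_sub_sub_mem_rctr
    (hcondii : ∀ a ∈ P11 e, ∀ b ∈ P22 e,
      (∀ x ∈ P21 e, (a + b) * x = x * (a + b)) → a + b ∈ rctr R)
    {a : R} (ha : a ∈ P12 e) : D (e + a) - D e - D a ∈ rctr R := by
  set Γ := D (e + a) - D e - D a
  have hadd := hD.map_commRight_commutator_add halt he e a
  have hΓe : commRight e (commRight e Γ) = 0 := by
    have h := hadd e
    rw [show (e + a) * e - e * (e + a) = a * e - e * a by rw [add_mul, mul_add, he.eq]; abel,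
      sub_self, _root_.map_zero, hD.map_zero, zero_add] at h
    exact left_eq_add.mp h
  obtain ⟨p, hp, q, hq, hpq⟩ := halt.exists_P11_P22_of_commRight_commRight_eq_zero he hΓe
  rw [← hpq]
  refine hcondii p hp q hq fun y hy => sub_eq_zero.mp ?_
  rw [← halt.commRight_commutator_of_mem_P21 hp hq hy, hpq]
  have h := hadd y
  rw [show (e + a) * y - y * (e + a) = (a * y - y * a) + (e * y - y * e) by
      rw [add_mul, mul_add]; abel,
    map_add, halt.commRight_commutator_of_mem_P12_of_mem_P21 ha hy, hD.map_zero, zero_add,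
    add_zero] at h
  exact left_eq_add.mp h

end IsMultLieNDeriv

theorem stmt2_general {R : Type*} [NonUnitalNonAssocRing R] (halt : IsAlt R)
    (e₁ : R) (he : e₁ * e₁ = e₁)
    (hcondii : ∀ a ∈ P11 e₁, ∀ b ∈ P22 e₁,
      (∀ x ∈ P21 e₁, (a + b) * x = x * (a + b)) → a + b ∈ rctr R)
    (n : ℕ) (hn : 2 ≤ n) (D : R → R) (hD : IsMultLieNDeriv n D) :
    ∀ a ∈ P12 e₁, ∀ b ∈ P21 e₁, D (a + b) = D a + D b := by
  intro a ha b hb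
  obtain ⟨m, rfl⟩ : ∃ m, n = m + 2 := ⟨n - 2, by omega⟩
  have hcentral := hD.map_add_sub_sub_mem_rctr halt he hcondii ha (e₁ - b)
  have he_bracket : commRight e₁ (e₁ * (e₁ - b) - (e₁ - b) * e₁) = b := by
    rw [mul_sub, sub_mul, hb.1, hb.2, sub_zero, sub_sub_cancel, commRight_of_mem_P21 hb]
  have ha_bracket : commRight e₁ (a * (e₁ - b) - (e₁ - b) * a) = a := by
    rw [mul_sub, sub_mul, ha.1, ha.2,
      show 0 - a * b - (a - b * a) = -a - (a * b - b * a) by abel, map_sub, map_neg,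
      commRight_of_mem_P12 ha, halt.commRight_commutator_of_mem_P12_of_mem_P21 ha hb, neg_neg, sub_zero]
  have h := hD.map_commRight_commutator_add halt he e₁ a (e₁ - b)
  rw [add_mul, mul_add, add_sub_add_comm, map_add, he_bracket, ha_bracket,
    sub_eq_zero.mpr hcentral, map_zero, add_zero, add_comm b] at h
  rw [h, add_comm]

theorem stmt2 {R : Type*} [NonUnitalNonAssocRing R] (halt : IsAlt R)
    (e₁ : R) (he : e₁ * e₁ = e₁) (hne : e₁ ≠ 0)
    (hnu : ¬ ∀ x : R, e₁ * x = x ∧ x * e₁ = x)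
    (hcondi : ∀ a ∈ P11 e₁, ∀ b ∈ P22 e₁,
      (∀ x ∈ P12 e₁, (a + b) * x = x * (a + b)) → a + b ∈ rctr R)
    (hcondii : ∀ a ∈ P11 e₁, ∀ b ∈ P22 e₁,
      (∀ x ∈ P21 e₁, (a + b) * x = x * (a + b)) → a + b ∈ rctr R)
    (n : ℕ) (hn : 2 ≤ n) (D : R → R) (hD : IsMultLieNDeriv n D) :
    ∀ a ∈ P12 e₁, ∀ b ∈ P21 e₁, D (a + b) = D a + D b :=
  stmt2_general halt e₁ he hcondii n hn D hD
end

section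
/- Let R be an alternative ring with a nontrivial idempotent e₁ satisfying conditions (i) and (ii), let n ≥ 2 be an integer and let D : R → R be a multiplicative Lie n-derivation. Then for all a ∈ R₁₁, b ∈ R₁₂, c ∈ R₂₁ and d ∈ R₂₂ there exists z ∈ Z(R) such that D(a + b + c + d) = D(a) + D(b) + D(c) + D(d) + z. -/
/-!
Write `ad v u = [u, v]` and `δ(u, v) = D (u + v) - D u - D v`. The derivation rule makes `δ`
commute with iterated brackets: bracketing `δ(u, v)` with `w₁, …, wₖ` gives the `δ` of the
bracketed `u` and `v`, and similarly for a defect in the first bracketing slot. Since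
`p_{2n-1}(x) = p_n(p_n(x₁, …, xₙ), xₙ₊₁, …, x₂ₙ₋₁)`, a Lie `n`-derivation is also a Lie
`(2n-1)`-derivation, so we may use an odd number `2p + 3` of slots.

In an alternative ring `ad e` is `0` on `R₁₁ + R₂₂`, `-1` on `R₁₂` and `1` on `R₂₁`. Bracketing
with `2p + 2` copies of `e` therefore projects onto `R₁₂ ⊕ R₂₁`, while bracketing first with
`x ∈ R₁₂` and then with `2p + 1` copies of `e` recovers `±[t, x]` for `t ∈ R₁₁ + R₂₂`; if both
probes kill `t`, condition (i) makes `t` central (and symmetrically with `R₂₁` and (ii)). Applied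
to defects, the probes show in turn that `δ(R₁₁, R₂₁)` and `δ(R₁₁, R₁₂)` are central, that `D` is
additive on `R₁₂ × R₂₁` and on `R₁₂ × R₁₂`, and finally that
`D (a + b + c + d) - D a - D b - D c - D d` is central.
-/

theorem List.modify_append_left {α : Type*} (f : α → α) {l₁ : List α} (l₂ : List α) {i : ℕ}
    (h : i < l₁.length) : (l₁ ++ l₂).modify i f = l₁.modify i f ++ l₂ := by
  induction l₁ generalizing i with
  | nil => simp at h
  | cons x l₁ ih => cases i <;> simp_all

theorem List.modify_append_right {α : Type*} (f : α → α) (l₁ l₂ : List α) (i : ℕ) :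
    (l₁ ++ l₂).modify (l₁.length + i) f = l₁ ++ l₂.modify i f := by
  induction l₁ with
  | nil => simp
  | cons x l₁ ih => simp [Nat.add_right_comm, ih]

theorem List.ofFn_update_eq_modify {α : Type*} {k : ℕ} (y : Fin k → α) (i : Fin k)
    (f : α → α) : List.ofFn (Function.update y i (f (y i))) = (List.ofFn y).modify i f := by
  refine List.ext_getElem (by simp) fun j _ _ => ?_
  simp only [List.getElem_ofFn, List.getElem_modify, Function.update_apply, Fin.ext_iff]
  by_cases hij : j = i
  · subst hij; simp
  · rw [if_neg hij, if_neg (Ne.symm hij)]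

namespace LieDeriv

variable {R : Type*} [NonUnitalNonAssocRing R]

def ad : R →+ AddMonoid.End R := AddMonoid.End.mulRight - AddMonoid.End.mulLeft

@[simp] lemma ad_apply (v u : R) : ad v u = u * v - v * u := rfl

/-- `adChain [v₁, …, vₖ] a = [[[a, v₁], …], vₖ]`. -/
def adChain (l : List R) : AddMonoid.End R := (l.map ad).reverse.prod

@[simp] lemma adChain_cons (v : R) (l : List R) : adChain (v :: l) = adChain l * ad v := by
  simp [adChain]

lemma adChain_append (l₁ l₂ : List R) : adChain (l₁ ++ l₂) = adChain l₂ * adChain l₁ := by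
  simp [adChain]

lemma adChain_replicate (k : ℕ) (v : R) : adChain (List.replicate k v) = ad v ^ k := by
  simp only [adChain, List.map_replicate, List.reverse_replicate, List.prod_replicate]

lemma pn_succ_eq_adChain (k : ℕ) (x : Fin (k + 1) → R) :
    pn (k + 1) x = adChain (List.ofFn fun i : Fin k => x i.succ) (x 0) := by
  induction k with
  | zero => rfl
  | succ k ih =>
    rw [pn, ih, List.ofFn_succ', List.concat_eq_append, adChain_append]
    rfl

/-- The rule of a multiplicative Lie `(k + 1)`-derivation, for the bracket of `a` with a list
of `k` elements; `l.modify i D` applies `D` to the `i`-th entry of `l`. -/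
def ChainRule (k : ℕ) (D : R → R) : Prop :=
  ∀ (a : R) (l : List R), l.length = k →
    D (adChain l a) = adChain l (D a) + ∑ i ∈ Finset.range k, adChain (l.modify i D) a

def defect (D : R → R) (u v : R) : R := D (u + v) - D u - D v

end LieDeriv

open LieDeriv

theorem IsMultLieNDeriv.chainRule {R : Type*} [NonUnitalNonAssocRing R] {k : ℕ} {D : R → R}
    (hD : IsMultLieNDeriv (k + 1) D) : ChainRule k D := by
  rintro a l rfl
  have h := hD (Fin.cons a fun i : Fin l.length => l[(i : ℕ)])
  rw [Fin.sum_univ_succ, Fin.update_cons_zero] at h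
  simp only [Fin.cons_succ, ← Fin.cons_update, pn_succ_eq_adChain, Fin.cons_zero,
    List.ofFn_update_eq_modify] at h
  rw [List.ofFn_getElem] at h
  rw [h, ← Fin.sum_univ_eq_sum_range (fun i => adChain (l.modify i D) a)]

namespace LieDeriv

variable {R : Type*} [NonUnitalNonAssocRing R] {D : R → R}

lemma defect_eq_zero_iff {u v : R} : defect D u v = 0 ↔ D (u + v) = D u + D v := by
  rw [defect, sub_sub, sub_eq_zero]

lemma defect_zero_left (hD0 : D 0 = 0) (u : R) : defect D 0 u = 0 := by
  simp [defect, hD0]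

lemma defect_zero_right (hD0 : D 0 = 0) (u : R) : defect D u 0 = 0 := by
  simp [defect, hD0]

lemma sub_sub_sub_sub_eq_defect (a b c d : R) :
    D (a + b + c + d) - D a - D b - D c - D d
      = defect D (a + b + c) d + defect D (a + b) c + defect D a b := by
  simp only [defect]; abel

lemma ad_eq_zero_of_mem_rctr {z : R} (hz : z ∈ rctr R) (w : R) : ad z w = 0 := by
  rw [ad_apply, hz w, sub_self]

namespace ChainRule

variable {k : ℕ} {l : List R}

lemma apply_zero (hD : ChainRule (k + 1) D) : D 0 = 0 := by
  simpa [adChain_replicate] using hD 0 (List.replicate (k + 1) 0) (List.length_replicate ..)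

lemma double (hD : ChainRule k D) : ChainRule (2 * k) D := by
  rintro a l hl
  obtain ⟨l₁, l₂, rfl, h₁, h₂⟩ : ∃ l₁ l₂ : List R, l = l₁ ++ l₂ ∧ l₁.length = k ∧ l₂.length = k :=
    ⟨l.take k, l.drop k, (List.take_append_drop k l).symm, by simp; omega, by simp; omega⟩
  have hleft : ∀ i ∈ Finset.range k,
      adChain ((l₁ ++ l₂).modify i D) a = adChain l₂ (adChain (l₁.modify i D) a) := fun i hi => by
    rw [List.modify_append_left _ _ (h₁ ▸ Finset.mem_range.mp hi), adChain_append]; rfl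
  have hright : ∀ i ∈ Finset.range k,
      adChain ((l₁ ++ l₂).modify (k + i) D) a = adChain (l₂.modify i D) (adChain l₁ a) :=
    fun i _ => by rw [← h₁, List.modify_append_right, adChain_append]; rfl
  rw [adChain_append, AddMonoid.End.coe_mul, Function.comp_apply, hD _ l₂ h₂, hD a l₁ h₁,
    map_add, map_sum, two_mul, Finset.sum_range_add, Finset.sum_congr rfl hleft,
    Finset.sum_congr rfl hright, add_assoc]
  rfl

lemma adChain_defect (hD : ChainRule k D) (hl : l.length = k) (u v : R) :
    adChain l (defect D u v) = defect D (adChain l u) (adChain l v) := by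
  simp only [defect, ← map_add]
  rw [hD _ l hl, hD _ l hl, hD _ l hl]
  simp only [map_add, map_sub, Finset.sum_add_distrib]
  abel

lemma apply_adChain_cons (hD : ChainRule (k + 1) D) (hl : l.length = k) (a w : R) :
    D (adChain (w :: l) a) = adChain l (ad w (D a)) + adChain l (ad (D w) a)
      + ∑ i ∈ Finset.range k, adChain (l.modify i D) (ad w a) := by
  rw [hD a (w :: l) (by simp [hl]), Finset.sum_range_succ']
  simp only [List.modify_succ_cons, List.modify_zero_cons, adChain_cons, AddMonoid.End.coe_mul,
    Function.comp_apply]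
  abel

lemma adChain_cons_defect (hD : ChainRule (k + 1) D) (hl : l.length = k) (a u v : R) :
    adChain (defect D u v :: l) a = defect D (adChain (u :: l) a) (adChain (v :: l) a) := by
  have hsum : adChain (u :: l) a + adChain (v :: l) a = adChain ((u + v) :: l) a := by
    simp only [adChain_cons, AddMonoid.End.coe_mul, Function.comp_apply, ad_apply]
    simp only [mul_add, add_mul, map_sub, map_add]
    abel
  unfold defect
  rw [hsum, hD.apply_adChain_cons hl, hD.apply_adChain_cons hl, hD.apply_adChain_cons hl]
  simp only [adChain_cons, AddMonoid.End.coe_mul, Function.comp_apply, ad_apply]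
  simp only [mul_add, add_mul, mul_sub, sub_mul, map_add, map_sub, Finset.sum_add_distrib,
    Finset.sum_sub_distrib]
  abel

variable {e : R} {p : ℕ}

lemma ad_pow_defect (hD : ChainRule (2 * p + 2) D) (u v : R) :
    (ad e ^ (2 * p + 2)) (defect D u v)
      = defect D ((ad e ^ (2 * p + 2)) u) ((ad e ^ (2 * p + 2)) v) := by
  simpa only [adChain_replicate] using
    hD.adChain_defect (List.length_replicate (n := 2 * p + 2)) u v

lemma ad_pow_ad_defect (hD : ChainRule (2 * p + 2) D) (x u v : R) :
    (ad e ^ (2 * p + 1)) (ad x (defect D u v))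
      = defect D ((ad e ^ (2 * p + 1)) (ad x u)) ((ad e ^ (2 * p + 1)) (ad x v)) := by
  simpa only [adChain_cons, adChain_replicate, AddMonoid.End.coe_mul, Function.comp_apply] using
    hD.adChain_defect (l := x :: List.replicate (2 * p + 1) e) (by simp) u v

lemma ad_pow_defect_ad (hD : ChainRule (2 * p + 2) D) (a u v : R) :
    (ad e ^ (2 * p + 1)) (ad (defect D u v) a)
      = defect D ((ad e ^ (2 * p + 1)) (ad u a)) ((ad e ^ (2 * p + 1)) (ad v a)) := by
  simpa only [adChain_cons, adChain_replicate, AddMonoid.End.coe_mul, Function.comp_apply] using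
    hD.adChain_cons_defect (l := List.replicate (2 * p + 1) e) (by simp) a u v

end ChainRule

end LieDeriv

namespace IsAlt

variable {R : Type*} [NonUnitalNonAssocRing R] {e : R}

lemma polarize_left (halt : IsAlt R) (u v w : R) :
    (u * v) * w + (v * u) * w = u * (v * w) + v * (u * w) := by
  have h := (halt (u + v) w).1
  simp only [add_mul, mul_add] at h
  linear_combination (norm := abel) h - (halt u w).1 - (halt v w).1

lemma polarize_right (halt : IsAlt R) (u v w : R) :
    (w * u) * v + (w * v) * u = w * (u * v) + w * (v * u) := by
  have h := (halt (u + v) w).2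
  simp only [add_mul, mul_add] at h
  linear_combination (norm := abel) h - (halt u w).2 - (halt v w).2

lemma mul_mul_left (halt : IsAlt R) (x u v : R) :
    x * (u * v) = (x * u) * v + (u * x) * v - u * (x * v) := by
  linear_combination (norm := abel) -halt.polarize_left u x v

lemma mul_mul_right (halt : IsAlt R) (x u v : R) :
    (u * v) * x = u * (v * x) + u * (x * v) - (u * x) * v := by
  linear_combination (norm := abel) halt.polarize_right v x u

lemma associator_cycle (halt : IsAlt R) (x u v : R) :
    (u * x) * v - u * (x * v) = (x * v) * u - x * (v * u) := by
  linear_combination (norm := abel) halt.polarize_left u x v - halt.polarize_right u v x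

lemma idem_mul_idem_mul_s5 (halt : IsAlt R) (he : e * e = e) (u : R) : e * (e * u) = e * u := by
  simpa [he] using ((halt e u).1).symm

lemma mul_idem_mul_idem_s5 (halt : IsAlt R) (he : e * e = e) (u : R) : (u * e) * e = u * e := by
  simpa [he] using (halt e u).2

lemma idem_flexible (halt : IsAlt R) (he : e * e = e) (u : R) : (e * u) * e = e * (u * e) := by
  linear_combination (norm := abel)
    halt.polarize_left u e e - halt.mul_idem_mul_idem_s5 he u + congrArg (u * ·) he

variable {a b c d x y : R}

lemma P11_mul_P12 (halt : IsAlt R) (ha : a ∈ P11 e) (hx : x ∈ P12 e) : a * x ∈ P12 e :=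
  ⟨by rw [halt.mul_mul_left, ha.1, ha.2, hx.1]; abel,
   by rw [halt.mul_mul_right, hx.2, hx.1, ha.2]; simp⟩

lemma P12_mul_P22 (halt : IsAlt R) (hx : x ∈ P12 e) (hd : d ∈ P22 e) : x * d ∈ P12 e :=
  ⟨by rw [halt.mul_mul_left, hx.1, hx.2, hd.1]; simp,
   by rw [halt.mul_mul_right, hd.2, hd.1, hx.2]; simp⟩

lemma P12_mul_P12 (halt : IsAlt R) (hb : b ∈ P12 e) (hx : x ∈ P12 e) : b * x ∈ P21 e :=
  ⟨by rw [halt.mul_mul_left, hb.1, hb.2, hx.1]; simp,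
   by rw [halt.mul_mul_right, hx.2, hx.1, hb.2]; simp⟩

lemma P12_mul_P21 (halt : IsAlt R) (hx : x ∈ P12 e) (hc : c ∈ P21 e) : x * c ∈ P11 e :=
  ⟨by rw [halt.mul_mul_left, hx.1, hx.2, hc.1]; simp,
   by rw [halt.mul_mul_right, hc.2, hc.1, hx.2]; simp⟩

lemma P21_mul_P12 (halt : IsAlt R) (hc : c ∈ P21 e) (hx : x ∈ P12 e) : c * x ∈ P22 e :=
  ⟨by rw [halt.mul_mul_left, hc.1, hc.2, hx.1]; simp,
   by rw [halt.mul_mul_right, hx.2, hx.1, hc.2]; simp⟩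

lemma P21_mul_P11 (halt : IsAlt R) (hy : y ∈ P21 e) (ha : a ∈ P11 e) : y * a ∈ P21 e :=
  ⟨by rw [halt.mul_mul_left, hy.1, hy.2, ha.1]; simp,
   by rw [halt.mul_mul_right, ha.2, ha.1, hy.2]; simp⟩

lemma P22_mul_P21 (halt : IsAlt R) (hd : d ∈ P22 e) (hy : y ∈ P21 e) : d * y ∈ P21 e :=
  ⟨by rw [halt.mul_mul_left, hd.1, hd.2, hy.1]; simp,
   by rw [halt.mul_mul_right, hy.2, hy.1, hd.2]; simp⟩

lemma P12_mul_P11 (halt : IsAlt R) (hx : x ∈ P12 e) (ha : a ∈ P11 e) : x * a = 0 := by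
  have h := halt.associator_cycle e x a
  rw [hx.2, ha.1, (halt.P11_mul_P12 ha hx).1] at h
  simpa using h

lemma P22_mul_P12 (halt : IsAlt R) (hd : d ∈ P22 e) (hx : x ∈ P12 e) : d * x = 0 := by
  have h := halt.associator_cycle e d x
  rw [hd.2, hx.1, (halt.P12_mul_P22 hx hd).1] at h
  simpa using h

lemma P11_mul_P21 (halt : IsAlt R) (ha : a ∈ P11 e) (hy : y ∈ P21 e) : a * y = 0 := by
  have h := halt.associator_cycle e a y
  rw [ha.2, hy.1, (halt.P21_mul_P11 hy ha).1] at h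
  simpa using h

lemma P21_mul_P22 (halt : IsAlt R) (hy : y ∈ P21 e) (hd : d ∈ P22 e) : y * d = 0 := by
  have h := halt.associator_cycle e y d
  rw [hy.2, hd.1, (halt.P22_mul_P21 hd hy).1] at h
  simpa using h

end IsAlt

section Peirce

variable {R : Type*} [NonUnitalNonAssocRing R] {e u v : R}

lemma add_mem_P12 (hu : u ∈ P12 e) (hv : v ∈ P12 e) : u + v ∈ P12 e :=
  ⟨by rw [mul_add, hu.1, hv.1], by rw [add_mul, hu.2, hv.2, add_zero]⟩

lemma neg_mem_P12 (hu : u ∈ P12 e) : -u ∈ P12 e :=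
  ⟨by rw [mul_neg, hu.1], by rw [neg_mul, hu.2, neg_zero]⟩

lemma sub_mem_P12 (hu : u ∈ P12 e) (hv : v ∈ P12 e) : u - v ∈ P12 e :=
  sub_eq_add_neg u v ▸ add_mem_P12 hu (neg_mem_P12 hv)

lemma sub_mem_P21 (hu : u ∈ P21 e) (hv : v ∈ P21 e) : u - v ∈ P21 e :=
  ⟨by rw [mul_sub, hu.1, hv.1, sub_zero], by rw [sub_mul, hu.2, hv.2]⟩

def CondI (e : R) : Prop :=
  ∀ a ∈ P11 e, ∀ b ∈ P22 e, (∀ x ∈ P12 e, (a + b) * x = x * (a + b)) → a + b ∈ rctr R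

def CondII (e : R) : Prop :=
  ∀ a ∈ P11 e, ∀ b ∈ P22 e, (∀ x ∈ P21 e, (a + b) * x = x * (a + b)) → a + b ∈ rctr R

end Peirce

namespace LieDeriv

variable {R : Type*} [NonUnitalNonAssocRing R] {e x : R}

lemma ad_of_mem_P11 (hx : x ∈ P11 e) : ad e x = 0 := by simp [hx.1, hx.2]

lemma ad_of_mem_P12 (hx : x ∈ P12 e) : ad e x = -x := by simp [hx.1, hx.2]

lemma ad_of_mem_P21 (hx : x ∈ P21 e) : ad e x = x := by simp [hx.1, hx.2]

lemma ad_of_mem_P22 (hx : x ∈ P22 e) : ad e x = 0 := by simp [hx.1, hx.2]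

lemma ad_pow_succ_of_mem_P11 (hx : x ∈ P11 e) (k : ℕ) : (ad e ^ (k + 1)) x = 0 := by
  rw [pow_succ, AddMonoid.End.coe_mul, Function.comp_apply, ad_of_mem_P11 hx, map_zero]

lemma ad_pow_succ_of_mem_P22 (hx : x ∈ P22 e) (k : ℕ) : (ad e ^ (k + 1)) x = 0 := by
  rw [pow_succ, AddMonoid.End.coe_mul, Function.comp_apply, ad_of_mem_P22 hx, map_zero]

lemma ad_pow_of_mem_P21 (hx : x ∈ P21 e) (k : ℕ) : (ad e ^ k) x = x := by
  rw [AddMonoid.End.coe_pow]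
  exact Function.iterate_fixed (ad_of_mem_P21 hx) k

lemma ad_pow_two_mul_of_mem_P12 (hx : x ∈ P12 e) (k : ℕ) : (ad e ^ (2 * k)) x = x := by
  have h2 : (ad e ^ 2) x = x := by
    rw [sq, AddMonoid.End.coe_mul, Function.comp_apply, ad_of_mem_P12 hx, map_neg,
      ad_of_mem_P12 hx, neg_neg]
  rw [pow_mul, AddMonoid.End.coe_pow]
  exact Function.iterate_fixed h2 k

lemma ad_pow_two_mul_add_one_of_mem_P12 (hx : x ∈ P12 e) (k : ℕ) :
    (ad e ^ (2 * k + 1)) x = -x := by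
  rw [pow_succ, AddMonoid.End.coe_mul, Function.comp_apply, ad_of_mem_P12 hx, map_neg,
    ad_pow_two_mul_of_mem_P12 hx]

end LieDeriv

namespace IsAlt

variable {R : Type*} [NonUnitalNonAssocRing R] {e t : R}

lemma idem_mul_mul_idem_mem_P11 (halt : IsAlt R) (he : e * e = e) (u : R) :
    (e * u) * e ∈ P11 e :=
  ⟨by rw [halt.idem_flexible he, halt.idem_mul_idem_mul_s5 he, ← halt.idem_flexible he],
   halt.mul_idem_mul_idem_s5 he _⟩

lemma idem_mul_sub_mem_P12 (halt : IsAlt R) (he : e * e = e) (u : R) :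
    e * u - (e * u) * e ∈ P12 e :=
  ⟨by rw [mul_sub, halt.idem_mul_idem_mul_s5 he, (halt.idem_mul_mul_idem_mem_P11 he u).1],
   by rw [sub_mul, halt.mul_idem_mul_idem_s5 he, sub_self]⟩

lemma mul_idem_sub_mem_P21 (halt : IsAlt R) (he : e * e = e) (u : R) :
    u * e - e * (u * e) ∈ P21 e :=
  ⟨by rw [mul_sub, halt.idem_mul_idem_mul_s5 he, sub_self],
   by rw [sub_mul, halt.mul_idem_mul_idem_s5 he, ← halt.idem_flexible he,
     (halt.idem_mul_mul_idem_mem_P11 he u).2, halt.idem_flexible he]⟩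

lemma ad_ad_eq (halt : IsAlt R) (he : e * e = e) (u : R) :
    ad e (ad e u) = (e * u - (e * u) * e) + (u * e - e * (u * e)) := by
  simp only [ad_apply, sub_mul, mul_sub, halt.mul_idem_mul_idem_s5 he, halt.idem_mul_idem_mul_s5 he]
  abel

lemma ad_pow_two_mul_add_two (halt : IsAlt R) (he : e * e = e) (p : ℕ) (u : R) :
    (ad e ^ (2 * p + 2)) u = ad e (ad e u) := by
  rw [pow_add, AddMonoid.End.coe_mul, Function.comp_apply, sq, AddMonoid.End.coe_mul,
    Function.comp_apply, halt.ad_ad_eq he, map_add,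
    ad_pow_two_mul_of_mem_P12 (halt.idem_mul_sub_mem_P12 he u),
    ad_pow_of_mem_P21 (halt.mul_idem_sub_mem_P21 he u)]

lemma exists_P11_P22_of_ad_ad_eq_zero (halt : IsAlt R) (he : e * e = e)
    (ht : ad e (ad e t) = 0) : ∃ a ∈ P11 e, ∃ d ∈ P22 e, t = a + d := by
  have h12 := halt.idem_mul_sub_mem_P12 he t
  have h21 := halt.mul_idem_sub_mem_P21 he t
  rw [halt.ad_ad_eq he] at ht
  have hp : e * t - (e * t) * e = 0 := by
    simpa [mul_add, h12.1, h21.1] using congrArg (e * ·) ht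
  have hq : t * e - e * (t * e) = 0 := by rwa [hp, zero_add] at ht
  have ha := halt.idem_mul_mul_idem_mem_P11 he t
  refine ⟨_, ha, t - (e * t) * e, ⟨?_, ?_⟩, (add_sub_cancel _ _).symm⟩
  · rw [mul_sub, ha.1, hp]
  · rw [sub_mul, ha.2, halt.idem_flexible he, hq]

lemma mem_rctr_of_P12 (halt : IsAlt R) (he : e * e = e) (hcond : CondI e) (p : ℕ)
    (hoff : (ad e ^ (2 * p + 2)) t = 0)
    (hbr : ∀ x ∈ P12 e, (ad e ^ (2 * p + 1)) (ad x t) = 0) : t ∈ rctr R := by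
  rw [halt.ad_pow_two_mul_add_two he] at hoff
  obtain ⟨a, ha, d, hd, rfl⟩ := halt.exists_P11_P22_of_ad_ad_eq_zero he hoff
  refine hcond a ha d hd fun x hx => ?_
  have hmem : ad x (a + d) ∈ P12 e := by
    rw [ad_apply, add_mul, mul_add, halt.P12_mul_P11 hx ha, halt.P22_mul_P12 hd hx, add_zero,
      zero_add]
    exact sub_mem_P12 (halt.P11_mul_P12 ha hx) (halt.P12_mul_P22 hx hd)
  have h := hbr x hx
  rwa [ad_pow_two_mul_add_one_of_mem_P12 hmem, neg_eq_zero, ad_apply, sub_eq_zero] at h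

lemma mem_rctr_of_P21 (halt : IsAlt R) (he : e * e = e) (hcond : CondII e) (p : ℕ)
    (hoff : (ad e ^ (2 * p + 2)) t = 0)
    (hbr : ∀ y ∈ P21 e, (ad e ^ (2 * p + 1)) (ad y t) = 0) : t ∈ rctr R := by
  rw [halt.ad_pow_two_mul_add_two he] at hoff
  obtain ⟨a, ha, d, hd, rfl⟩ := halt.exists_P11_P22_of_ad_ad_eq_zero he hoff
  refine hcond a ha d hd fun y hy => ?_
  have hmem : ad y (a + d) ∈ P21 e := by
    rw [ad_apply, add_mul, mul_add, halt.P11_mul_P21 ha hy, halt.P21_mul_P22 hy hd, zero_add,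
      add_zero]
    exact sub_mem_P21 (halt.P22_mul_P21 hd hy) (halt.P21_mul_P11 hy ha)
  have h := hbr y hy
  rwa [ad_pow_of_mem_P21 hmem, ad_apply, sub_eq_zero] at h

end IsAlt

namespace LieDeriv.ChainRule

variable {R : Type*} [NonUnitalNonAssocRing R] {D : R → R} {e a b c d : R} {p : ℕ}

lemma defect_mem_rctr_of_P11_P21 (hD : ChainRule (2 * p + 2) D) (halt : IsAlt R)
    (he : e * e = e) (hcond : CondI e) (ha : a ∈ P11 e) (hc : c ∈ P21 e) :
    defect D a c ∈ rctr R := by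
  refine halt.mem_rctr_of_P12 he hcond p ?_ fun x hx => ?_
  · rw [hD.ad_pow_defect, ad_pow_succ_of_mem_P11 ha, defect_zero_left hD.apply_zero]
  · rw [hD.ad_pow_ad_defect, ad_apply, ad_apply, halt.P12_mul_P11 hx ha, sub_zero, map_sub,
      ad_pow_succ_of_mem_P22 (halt.P21_mul_P12 hc hx),
      ad_pow_succ_of_mem_P11 (halt.P12_mul_P21 hx hc), sub_zero, defect_zero_right hD.apply_zero]

lemma defect_mem_rctr_of_P11_P12 (hD : ChainRule (2 * p + 2) D) (halt : IsAlt R)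
    (he : e * e = e) (hcond : CondII e) (ha : a ∈ P11 e) (hb : b ∈ P12 e) :
    defect D a b ∈ rctr R := by
  refine halt.mem_rctr_of_P21 he hcond p ?_ fun y hy => ?_
  · rw [hD.ad_pow_defect, ad_pow_succ_of_mem_P11 ha, defect_zero_left hD.apply_zero]
  · rw [hD.ad_pow_ad_defect, ad_apply, ad_apply, halt.P11_mul_P21 ha hy, zero_sub, map_neg,
      ad_pow_of_mem_P21 (halt.P21_mul_P11 hy ha), map_sub,
      ad_pow_succ_of_mem_P11 (halt.P12_mul_P21 hb hy),
      ad_pow_succ_of_mem_P22 (halt.P21_mul_P12 hy hb), sub_zero, defect_zero_right hD.apply_zero]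

lemma apply_add_of_P12_P21 (hD : ChainRule (2 * p + 2) D) (halt : IsAlt R) (he : e * e = e)
    (hcond : CondI e) (hb : b ∈ P12 e) (hc : c ∈ P21 e) : D (b + c) = D b + D c := by
  -- `[b - e, e] = -b` and `[b - e, c] ≡ c` modulo `R₁₁ + R₂₂`, so after the odd power of
  -- `ad e` the probe turns the central defect `δ(e, c)` into `δ(b, c)`.
  have h := hD.ad_pow_defect_ad (e := e) (b - e) e c
  rw [ad_eq_zero_of_mem_rctr (hD.defect_mem_rctr_of_P11_P21 halt he hcond ⟨he, he⟩ hc),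
    map_zero] at h
  have hbe : ad e (b - e) = -b := by
    simp only [ad_apply, sub_mul, mul_sub, hb.1, hb.2, he]; abel
  have hbc : ad c (b - e) = b * c - c * b + c := by
    simp only [ad_apply, sub_mul, mul_sub, hc.1, hc.2]; abel
  rw [hbe, hbc, map_add, map_sub, map_neg, ad_pow_two_mul_add_one_of_mem_P12 hb, neg_neg,
    ad_pow_succ_of_mem_P11 (halt.P12_mul_P21 hb hc),
    ad_pow_succ_of_mem_P22 (halt.P21_mul_P12 hc hb),
    ad_pow_of_mem_P21 hc, sub_zero, zero_add] at h
  exact defect_eq_zero_iff.mp h.symm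

lemma apply_add_of_P12_P12 (hD : ChainRule (2 * p + 2) D) (halt : IsAlt R) (he : e * e = e)
    (hcondi : CondI e) (hcondii : CondII e) {b' : R} (hb : b ∈ P12 e) (hb' : b' ∈ P12 e) :
    D (b + b') = D b + D b' := by
  -- The same probe turns the central defect `δ(e, b')` into `δ(b, b' + [b, b'])`.
  have h := hD.ad_pow_defect_ad (e := e) (b - e) e b'
  rw [ad_eq_zero_of_mem_rctr (hD.defect_mem_rctr_of_P11_P12 halt he hcondii ⟨he, he⟩ hb'),
    map_zero] at h
  have hbe : ad e (b - e) = -b := by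
    simp only [ad_apply, sub_mul, mul_sub, hb.1, hb.2, he]; abel
  have hbb' : ad b' (b - e) = -b' + (b * b' - b' * b) := by
    simp only [ad_apply, sub_mul, mul_sub, hb'.1, hb'.2]; abel
  have hK : b * b' - b' * b ∈ P21 e :=
    sub_mem_P21 (halt.P12_mul_P12 hb hb') (halt.P12_mul_P12 hb' hb)
  rw [hbe, hbb', map_neg, map_add, map_neg, ad_pow_two_mul_add_one_of_mem_P12 hb,
    ad_pow_two_mul_add_one_of_mem_P12 hb', ad_pow_of_mem_P21 hK, neg_neg, neg_neg] at h
  have h' := defect_eq_zero_iff.mp h.symm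
  rw [← add_assoc, hD.apply_add_of_P12_P21 halt he hcondi (add_mem_P12 hb hb') hK,
    hD.apply_add_of_P12_P21 halt he hcondi hb' hK, ← add_assoc] at h'
  exact add_right_cancel h'

lemma sub_mem_rctr (hD : ChainRule (2 * p + 2) D) (halt : IsAlt R) (he : e * e = e)
    (hcondi : CondI e) (hcondii : CondII e)
    (ha : a ∈ P11 e) (hb : b ∈ P12 e) (hc : c ∈ P21 e) (hd : d ∈ P22 e) :
    D (a + b + c + d) - D a - D b - D c - D d ∈ rctr R := by
  have hD0 := hD.apply_zero
  have hA : ∀ {u v}, u ∈ P12 e → v ∈ P21 e → D (u + v) = D u + D v :=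
    hD.apply_add_of_P12_P21 halt he hcondi
  rw [sub_sub_sub_sub_eq_defect]
  refine halt.mem_rctr_of_P12 he hcondi p ?_ fun x hx => ?_
  · have hb2 : (ad e ^ (2 * p + 2)) b = b := ad_pow_two_mul_of_mem_P12 hb (p + 1)
    simp only [map_add, hD.ad_pow_defect, ad_pow_succ_of_mem_P11 ha, ad_pow_succ_of_mem_P22 hd,
      hb2, ad_pow_of_mem_P21 hc, zero_add, add_zero, defect_zero_left hD0,
      defect_zero_right hD0, defect_eq_zero_iff.mpr (hA hb hc)]
  · have hu : -(a * x) ∈ P12 e := neg_mem_P12 (halt.P11_mul_P12 ha hx)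
    have hv : x * d ∈ P12 e := halt.P12_mul_P22 hx hd
    have hK : b * x - x * b ∈ P21 e :=
      sub_mem_P21 (halt.P12_mul_P12 hb hx) (halt.P12_mul_P12 hx hb)
    have ga : (ad e ^ (2 * p + 1)) (ad x a) = -(a * x) := by
      rw [ad_apply, halt.P12_mul_P11 hx ha, sub_zero,
        ad_pow_two_mul_add_one_of_mem_P12 (halt.P11_mul_P12 ha hx)]
    have gb : (ad e ^ (2 * p + 1)) (ad x b) = b * x - x * b := ad_pow_of_mem_P21 hK _
    have gc : (ad e ^ (2 * p + 1)) (ad x c) = 0 := by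
      rw [ad_apply, map_sub, ad_pow_succ_of_mem_P22 (halt.P21_mul_P12 hc hx),
        ad_pow_succ_of_mem_P11 (halt.P12_mul_P21 hx hc), sub_zero]
    have gd : (ad e ^ (2 * p + 1)) (ad x d) = x * d := by
      rw [ad_apply, halt.P22_mul_P12 hd hx, zero_sub, map_neg,
        ad_pow_two_mul_add_one_of_mem_P12 hv, neg_neg]
    simp only [map_add, hD.ad_pow_ad_defect, ga, gb, gc, gd, add_zero, defect_zero_right hD0,
      defect_eq_zero_iff.mpr (hA hu hK)]
    rw [defect_eq_zero_iff, add_right_comm, hA (add_mem_P12 hu hv) hK, hA hu hK,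
      hD.apply_add_of_P12_P12 halt he hcondi hcondii hu hv]
    abel

end LieDeriv.ChainRule

theorem stmt5_general {R : Type*} [NonUnitalNonAssocRing R] (halt : IsAlt R)
    (e₁ : R) (he : e₁ * e₁ = e₁)
    (hcondi : ∀ a ∈ P11 e₁, ∀ b ∈ P22 e₁,
      (∀ x ∈ P12 e₁, (a + b) * x = x * (a + b)) → a + b ∈ rctr R)
    (hcondii : ∀ a ∈ P11 e₁, ∀ b ∈ P22 e₁,
      (∀ x ∈ P21 e₁, (a + b) * x = x * (a + b)) → a + b ∈ rctr R)
    (n : ℕ) (hn : 2 ≤ n) (D : R → R) (hD : IsMultLieNDeriv n D) :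
    ∀ a ∈ P11 e₁, ∀ b ∈ P12 e₁, ∀ c ∈ P21 e₁, ∀ d ∈ P22 e₁,
      ∃ z ∈ rctr R, D (a + b + c + d) = D a + D b + D c + D d + z := by
  obtain ⟨k, rfl⟩ : ∃ k, n = k + 2 := ⟨n - 2, by omega⟩
  have hchain : ChainRule (2 * k + 2) D := hD.chainRule.double
  intro a ha b hb c hc d hd
  exact ⟨_, hchain.sub_mem_rctr halt he hcondi hcondii ha hb hc hd, by abel⟩

theorem stmt5 {R : Type*} [NonUnitalNonAssocRing R] (halt : IsAlt R)
    (e₁ : R) (he : e₁ * e₁ = e₁) (hne : e₁ ≠ 0)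
    (hnu : ¬ ∀ x : R, e₁ * x = x ∧ x * e₁ = x)
    (hcondi : ∀ a ∈ P11 e₁, ∀ b ∈ P22 e₁,
      (∀ x ∈ P12 e₁, (a + b) * x = x * (a + b)) → a + b ∈ rctr R)
    (hcondii : ∀ a ∈ P11 e₁, ∀ b ∈ P22 e₁,
      (∀ x ∈ P21 e₁, (a + b) * x = x * (a + b)) → a + b ∈ rctr R)
    (n : ℕ) (hn : 2 ≤ n) (D : R → R) (hD : IsMultLieNDeriv n D) :
    ∀ a ∈ P11 e₁, ∀ b ∈ P12 e₁, ∀ c ∈ P21 e₁, ∀ d ∈ P22 e₁,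
      ∃ z ∈ rctr R, D (a + b + c + d) = D a + D b + D c + D d + z :=
  stmt5_general halt e₁ he hcondi hcondii n hn D hD
end
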